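/- arXiv:2111.10246 — 4 statements merged into one kernel-verified Lean document; each statement's English description precedes it below -/
import Mathlib

section
/- Let H ∈ ℝ^{m×n}, Q, R, S symmetric positive definite, W = HᵀQH + R + S. The ILC update map u ↦ W^{-1}(HᵀQ(r - w) + Ru) is a contraction on ℝ^n with respect to the norm ‖x‖_W = √(xᵀWx); specifically ‖W^{-1}R‖_W < 1. -/
/-!
The two iterates differ by `T u - T v = W⁻¹ R (u - v)`. Since `W - R = HᵀQH + S` is positive
definite, compactness of the unit sphere gives `c < 1` with `xᵀRx ≤ c xᵀWx` for all `x`. For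
`y = W⁻¹ R x` we have `yᵀWy = yᵀRx ≤ √(yᵀRy) √(xᵀRx) ≤ c ‖y‖_W ‖x‖_W` by Cauchy–Schwarz for the
form of `R`, hence `‖y‖_W ≤ c ‖x‖_W`.
-/

open Matrix

section Homogeneous

variable {E : Type*} [NormedAddCommGroup E] [NormedSpace ℝ E] {f : E → ℝ}

lemma eq_norm_sq_mul_of_homogeneous (hf : ∀ (c : ℝ) x, f (c • x) = c ^ 2 * f x) (x : E) :
    f x = ‖x‖ ^ 2 * f (‖x‖⁻¹ • x) := by
  rcases eq_or_ne x 0 with rfl | hx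
  · simpa using hf 0 0
  · rw [← hf, smul_smul, mul_inv_cancel₀ (norm_ne_zero_iff.2 hx), one_smul]

lemma exists_le_mul_norm_sq_of_homogeneous [FiniteDimensional ℝ E]
    (hf : ∀ (c : ℝ) x, f (c • x) = c ^ 2 * f x)
    (hcont : Continuous f) : ∃ C, ∀ x, f x ≤ C * ‖x‖ ^ 2 := by
  obtain ⟨C, hC⟩ := (isCompact_sphere (0 : E) 1).exists_bound_of_continuousOn hcont.continuousOn
  refine ⟨C, fun x => ?_⟩
  rcases eq_or_ne x 0 with rfl | hx
  · simpa using (hf 0 0).le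
  have hsphere : ‖x‖⁻¹ • x ∈ Metric.sphere (0 : E) 1 := by
    simp [norm_smul, hx]
  rw [eq_norm_sq_mul_of_homogeneous hf x, mul_comm C]
  exact mul_le_mul_of_nonneg_left ((le_abs_self _).trans (hC _ hsphere)) (sq_nonneg _)

lemma exists_pos_mul_norm_sq_le_of_homogeneous [FiniteDimensional ℝ E]
    (hf : ∀ (c : ℝ) x, f (c • x) = c ^ 2 * f x)
    (hcont : Continuous f) (hpos : ∀ x, x ≠ 0 → 0 < f x) :
    ∃ ε > 0, ∀ x, ε * ‖x‖ ^ 2 ≤ f x := by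
  obtain ⟨ε, hε, hεf⟩ := (isCompact_sphere (0 : E) 1).exists_forall_le' hcont.continuousOn
    fun x hx => hpos x (Metric.ne_of_mem_sphere hx one_ne_zero)
  refine ⟨ε, hε, fun x => ?_⟩
  rcases eq_or_ne x 0 with rfl | hx
  · simpa using (hf 0 0).ge
  have hsphere : ‖x‖⁻¹ • x ∈ Metric.sphere (0 : E) 1 := by
    simp [norm_smul, hx]
  rw [eq_norm_sq_mul_of_homogeneous hf x, mul_comm ε]
  exact mul_le_mul_of_nonneg_left (hεf _ hsphere) (sq_nonneg _)

end Homogeneous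

namespace Matrix

variable {ι : Type*} [Fintype ι]

lemma continuous_dotProduct_mulVec_self (A : Matrix ι ι ℝ) :
    Continuous fun x : ι → ℝ => x ⬝ᵥ A *ᵥ x := by
  fun_prop

lemma smul_dotProduct_mulVec_smul (A : Matrix ι ι ℝ) (c : ℝ) (x : ι → ℝ) :
    (c • x) ⬝ᵥ A *ᵥ (c • x) = c ^ 2 * (x ⬝ᵥ A *ᵥ x) := by
  rw [mulVec_smul, dotProduct_smul, smul_dotProduct, smul_smul, smul_eq_mul, sq]

lemma PosSemidef.dotProduct_mulVec_sq_le [DecidableEq ι] {A : Matrix ι ι ℝ} (hA : A.PosSemidef)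
    (x y : ι → ℝ) : (x ⬝ᵥ A *ᵥ y) ^ 2 ≤ (x ⬝ᵥ A *ᵥ x) * (y ⬝ᵥ A *ᵥ y) := by
  simpa only [toBilin'_apply'] using LinearMap.BilinForm.apply_sq_le_of_symm (toBilin' A)
    (fun z => by rw [toBilin'_apply']; simpa using hA.dotProduct_mulVec_nonneg z)
    (LinearMap.BilinForm.isSymm_iff.1 <|
      isSymm_toBilin'_iff_isSymm.2 (isHermitian_iff_isSymm.1 hA.isHermitian)) x y

lemma exists_lt_one_dotProduct_mulVec_le_of_posDef_sub {A B : Matrix ι ι ℝ}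
    (h : (B - A).PosDef) : ∃ c, 0 ≤ c ∧ c < 1 ∧ ∀ x, x ⬝ᵥ A *ᵥ x ≤ c * (x ⬝ᵥ B *ᵥ x) := by
  obtain ⟨ε, hε, hεD⟩ := exists_pos_mul_norm_sq_le_of_homogeneous
    (smul_dotProduct_mulVec_smul (B - A)) (continuous_dotProduct_mulVec_self (B - A))
    fun x hx => h.dotProduct_mulVec_pos hx
  obtain ⟨C, hCB⟩ := exists_le_mul_norm_sq_of_homogeneous
    (smul_dotProduct_mulVec_smul B) (continuous_dotProduct_mulVec_self B)
  -- enlarging `C` to be at least `ε` keeps `c = 1 - ε / C` in `[0, 1)`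
  set C' := max C ε
  have hC' : 0 < C' := lt_max_of_lt_right hε
  refine ⟨1 - ε / C', sub_nonneg.2 ((div_le_one hC').2 (le_max_right _ _)),
    sub_lt_self _ (div_pos hε hC'), fun x => ?_⟩
  have hB : x ⬝ᵥ B *ᵥ x ≤ C' * ‖x‖ ^ 2 :=
    (hCB x).trans (mul_le_mul_of_nonneg_right (le_max_left _ _) (sq_nonneg _))
  have hD := hεD x
  rw [sub_mulVec, dotProduct_sub] at hD
  have : ε / C' * (x ⬝ᵥ B *ᵥ x) ≤ ε * ‖x‖ ^ 2 := by
    rw [div_mul_eq_mul_div, div_le_iff₀ hC']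
    nlinarith
  nlinarith

variable [DecidableEq ι]

lemma sqrt_dotProduct_mulVec_inv_mul_le {W R : Matrix ι ι ℝ} (hW : W.PosDef)
    (hR : R.PosSemidef) {c : ℝ} (hc : 0 ≤ c) (hRW : ∀ x, x ⬝ᵥ R *ᵥ x ≤ c * (x ⬝ᵥ W *ᵥ x))
    (x : ι → ℝ) :
    √((W⁻¹ *ᵥ R *ᵥ x) ⬝ᵥ W *ᵥ (W⁻¹ *ᵥ R *ᵥ x)) ≤ c * √(x ⬝ᵥ W *ᵥ x) := by
  set y := W⁻¹ *ᵥ R *ᵥ x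
  have hWy : W *ᵥ y = R *ᵥ x := by
    rw [mulVec_mulVec, mul_nonsing_inv W ((isUnit_iff_isUnit_det W).1 hW.isUnit), one_mulVec]
  have hy := hW.posSemidef.dotProduct_mulVec_nonneg y
  have hx := hW.posSemidef.dotProduct_mulVec_nonneg x
  simp only [star_trivial] at hy hx
  -- `W`-energy of `y` is its `R`-pairing with `x`, which Cauchy–Schwarz for `R` bounds.
  have key : (√(y ⬝ᵥ W *ᵥ y)) ^ 2 ≤ c * √(y ⬝ᵥ W *ᵥ y) * √(x ⬝ᵥ W *ᵥ x) := calc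
    (√(y ⬝ᵥ W *ᵥ y)) ^ 2 = y ⬝ᵥ R *ᵥ x := by rw [Real.sq_sqrt hy, hWy]
    _ ≤ √((y ⬝ᵥ R *ᵥ x) ^ 2) := (le_abs_self _).trans (Real.sqrt_sq_eq_abs _).ge
    _ ≤ √(y ⬝ᵥ R *ᵥ y) * √(x ⬝ᵥ R *ᵥ x) := by
      rw [← Real.sqrt_mul (by simpa using hR.dotProduct_mulVec_nonneg y)]
      exact Real.sqrt_le_sqrt (hR.dotProduct_mulVec_sq_le y x)
    _ ≤ √(c * (y ⬝ᵥ W *ᵥ y)) * √(c * (x ⬝ᵥ W *ᵥ x)) := by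
      gcongr <;> exact hRW _
    _ = c * √(y ⬝ᵥ W *ᵥ y) * √(x ⬝ᵥ W *ᵥ x) := by
      rw [Real.sqrt_mul hc, Real.sqrt_mul hc]
      linear_combination √(y ⬝ᵥ W *ᵥ y) * √(x ⬝ᵥ W *ᵥ x) * Real.mul_self_sqrt hc
  nlinarith [mul_nonneg hc (Real.sqrt_nonneg (x ⬝ᵥ W *ᵥ x))]

end Matrix

theorem stmt_4 {m n : ℕ} (H : Matrix (Fin m) (Fin n) ℝ)
    (Q : Matrix (Fin m) (Fin m) ℝ) (R S : Matrix (Fin n) (Fin n) ℝ)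
    (hQ : Q.PosDef) (hR : R.PosDef) (hS : S.PosDef)
    (W : Matrix (Fin n) (Fin n) ℝ) (hW : W = Hᵀ * Q * H + R + S)
    (r w : Fin m → ℝ)
    (T : (Fin n → ℝ) → (Fin n → ℝ))
    (hT : T = fun u => W⁻¹.mulVec (Hᵀ.mulVec (Q.mulVec (r - w)) + R.mulVec u)) :
    ∃ γ : ℝ, γ < 1 ∧ ∀ u v : Fin n → ℝ,
      Real.sqrt ((T u - T v) ⬝ᵥ W.mulVec (T u - T v))
        ≤ γ * Real.sqrt ((u - v) ⬝ᵥ W.mulVec (u - v)) := by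
  have hHQH : (Hᵀ * Q * H).PosSemidef := by
    simpa using hQ.posSemidef.conjTranspose_mul_mul_same H
  have hWR : W - R = Hᵀ * Q * H + S := by rw [hW]; abel
  have hWpos : W.PosDef := by
    rw [hW]
    exact (PosDef.posSemidef_add hHQH hR).add_posSemidef hS.posSemidef
  obtain ⟨γ, hγ0, hγ1, hRW⟩ := exists_lt_one_dotProduct_mulVec_le_of_posDef_sub
    (hWR ▸ PosDef.posSemidef_add hHQH hS)
  refine ⟨γ, hγ1, fun u v => ?_⟩
  have hTuv : T u - T v = W⁻¹ *ᵥ R *ᵥ (u - v) := by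
    rw [hT, ← mulVec_sub, add_sub_add_left_eq_sub, ← mulVec_sub]
  rw [hTuv]
  exact sqrt_dotProduct_mulVec_inv_mul_le hWpos hR.posSemidef hγ0 hRW (u - v)
end

section
/- Under the assumptions of the previous statement, the ILC iteration u_{k+1} = W^{-1}(HᵀQ(r - w) + Ru_k) has a unique fixed point u* = (HᵀQH + S)^{-1}HᵀQ(r - w), and u_k → u* for any initial u_0. -/
/-!
With `M = HᵀQH + S` we have `W = M + R`, and `u*` is characterised by `M u* = Hᵀ Q (r - w)`,
which is exactly the fixed-point equation `W u* = Hᵀ Q (r - w) + R u*`. The error then obeys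
`e_{k+1} = W⁻¹ R e_k`. With `V = W^{1/2}`, the matrix `W⁻¹ R = V⁻¹ B V` is similar to the
Hermitian `B = V⁻¹ R V⁻¹`, which satisfies `0 ≤ B` and `0 < 1 - B = V⁻¹ M V⁻¹`. So the
eigenvalues of `B` lie in `[0, 1)`, `(W⁻¹ R)^k → 0`, and every orbit converges to `u*`; in
particular `u*` is the only fixed point.
-/

open Filter Matrix Topology
open scoped MatrixOrder ComplexOrder

namespace Matrix

variable {𝕜 : Type*} [RCLike 𝕜] {n : Type*} [Fintype n] [DecidableEq n]

lemma IsHermitian.eigenvalues_lt_one {B : Matrix n n 𝕜} (hB : B.IsHermitian)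
    (h : (1 - B).PosDef) (i : n) : hB.eigenvalues i < 1 := by
  have hmem : 1 - hB.eigenvalues i ∈ spectrum ℝ (1 - B) := by
    rw [← map_one (algebraMap ℝ (Matrix n n 𝕜)), ← spectrum.singleton_sub_eq]
    exact Set.sub_mem_sub rfl (hB.eigenvalues_mem_spectrum_real i)
  linarith [h.isStrictlyPositive.spectrum_pos hmem]

lemma IsHermitian.pow_eq_conj_diagonal {A : Matrix n n 𝕜} (hA : A.IsHermitian) (k : ℕ) :
    A ^ k = (hA.eigenvectorUnitary : Matrix n n 𝕜) *
      diagonal (fun i => (hA.eigenvalues i : 𝕜) ^ k) *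
      star (hA.eigenvectorUnitary : Matrix n n 𝕜) := by
  conv_lhs => rw [hA.spectral_theorem]
  rw [← map_pow, diagonal_pow, Unitary.conjStarAlgAut_apply]
  rfl

lemma IsHermitian.tendsto_pow_atTop_nhds_zero {A : Matrix n n 𝕜} (hA : A.IsHermitian)
    (h : ∀ i, |hA.eigenvalues i| < 1) : Tendsto (fun k : ℕ => A ^ k) atTop (𝓝 0) := by
  have hdiag : Tendsto (fun k => diagonal (fun i => (hA.eigenvalues i : 𝕜) ^ k)) atTop
      (𝓝 (diagonal 0)) := by
    refine (continuous_id.matrix_diagonal.tendsto _).comp (tendsto_pi_nhds.2 fun i => ?_)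
    simpa [Function.comp_def] using ((RCLike.continuous_ofReal (K := 𝕜)).tendsto 0).comp
      (tendsto_pow_atTop_nhds_zero_of_abs_lt_one (h i))
  rw [funext hA.pow_eq_conj_diagonal]
  simpa using (hdiag.const_mul _).mul_const _

lemma PosDef.tendsto_pow_inv_add_mul_nhds_zero {M R : Matrix n n 𝕜} (hM : M.PosDef)
    (hR : R.PosSemidef) : Tendsto (fun k : ℕ => ((M + R)⁻¹ * R) ^ k) atTop (𝓝 0) := by
  have hW : (M + R).PosDef := hM.add_posSemidef hR
  set V := CFC.sqrt (M + R)
  have hV : V.PosDef := isStrictlyPositive_iff_posDef.1 (.sqrt _ hW.isStrictlyPositive)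
  have hVV : V * V = M + R := CFC.sqrt_mul_sqrt_self _ hW.posSemidef.nonneg
  have hVdet : IsUnit V.det := (isUnit_iff_isUnit_det V).1 hV.isUnit
  have hVinv : V⁻¹ * V = 1 := nonsing_inv_mul _ hVdet
  have hVinv' : V * V⁻¹ = 1 := mul_nonsing_inv _ hVdet
  have hVinvH : (V⁻¹)ᴴ = V⁻¹ := hV.inv.isHermitian
  set B := V⁻¹ * R * V⁻¹
  have hB : B.PosSemidef := by
    simpa [hVinvH] using hR.conjTranspose_mul_mul_same V⁻¹
  have h1B : (1 - B).PosDef := by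
    convert hM.conjTranspose_mul_mul_same (mulVec_injective_iff_isUnit.2 hV.inv.isUnit) using 1
    rw [hVinvH, show M = V * V - R by rw [hVV, add_sub_cancel_right]]
    simp only [B, Matrix.mul_sub, Matrix.sub_mul, Matrix.mul_assoc, hVinv', Matrix.mul_one, hVinv]
  have hconj : (M + R)⁻¹ * R = V⁻¹ * B * V := by
    rw [← hVV, Matrix.mul_inv_rev]
    simp only [B, Matrix.mul_assoc, hVinv, Matrix.mul_one]
  have hpow : ∀ k, ((M + R)⁻¹ * R) ^ k = V⁻¹ * B ^ k * V := by
    intro k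
    rw [hconj]
    simpa [coe_units_inv] using Units.conj_pow' hV.isUnit.unit B k
  have hBk := hB.1.tendsto_pow_atTop_nhds_zero fun i =>
    abs_lt.2 ⟨by linarith [hB.eigenvalues_nonneg i], hB.1.eigenvalues_lt_one h1B i⟩
  simpa [hpow] using (hBk.const_mul V⁻¹).mul_const V

lemma tendsto_iterate_mulVec_add {R : Type*} [Ring R] [TopologicalSpace R] [IsTopologicalRing R]
    {A : Matrix n n R} (hA : Tendsto (fun k : ℕ => A ^ k) atTop (𝓝 0)) {b p : n → R}
    (hp : A *ᵥ p + b = p) (u : n → R) :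
    Tendsto (fun k => (fun v => A *ᵥ v + b)^[k] u) atTop (𝓝 p) := by
  have hiter : ∀ k, (fun v => A *ᵥ v + b)^[k] u = p + (A ^ k) *ᵥ (u - p) := by
    intro k
    induction k with
    | zero => simp
    | succ k ih =>
      rw [Function.iterate_succ_apply', ih, mulVec_add, pow_succ', ← mulVec_mulVec,
        add_right_comm, hp]
  have hlim : Tendsto (fun k => (A ^ k) *ᵥ (u - p)) atTop (𝓝 0) := by
    simpa [Function.comp_def] using
      ((continuous_id.matrix_mulVec continuous_const).tendsto 0).comp hA
  simpa [hiter] using hlim.const_add p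

end Matrix

theorem stmt_5 {m n : ℕ} (H : Matrix (Fin m) (Fin n) ℝ)
    (Q : Matrix (Fin m) (Fin m) ℝ) (R S : Matrix (Fin n) (Fin n) ℝ)
    (hQ : Q.PosDef) (hR : R.PosDef) (hS : S.PosDef)
    (W : Matrix (Fin n) (Fin n) ℝ) (hW : W = Hᵀ * Q * H + R + S)
    (r w : Fin m → ℝ)
    (T : (Fin n → ℝ) → (Fin n → ℝ))
    (hT : T = fun u => W⁻¹.mulVec (Hᵀ.mulVec (Q.mulVec (r - w)) + R.mulVec u))
    (ustar : Fin n → ℝ)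
    (hustar : ustar = (Hᵀ * Q * H + S)⁻¹.mulVec (Hᵀ.mulVec (Q.mulVec (r - w)))) :
    T ustar = ustar ∧ (∀ v, T v = v → v = ustar) ∧
      ∀ u0 : Fin n → ℝ,
        Filter.Tendsto (fun k => T^[k] u0) Filter.atTop (nhds ustar) := by
  set c := Hᵀ *ᵥ (Q *ᵥ (r - w))
  set M := Hᵀ * Q * H + S
  have hM : M.PosDef := by
    simpa [conjTranspose_eq_transpose_of_trivial] using
      hS.posSemidef_add (hQ.posSemidef.conjTranspose_mul_mul_same H)
  have hWMR : W = M + R := by rw [hW, add_right_comm]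
  have hMc : M *ᵥ ustar = c := by
    let := hM.isUnit.invertible
    rw [hustar, mulVec_mulVec, mul_inv_of_invertible, one_mulVec]
  have hTaff : T = fun v => (W⁻¹ * R) *ᵥ v + W⁻¹ *ᵥ c := by
    simp only [hT, mulVec_add, mulVec_mulVec, add_comm]
  have hfix : T ustar = ustar := by
    let := (hWMR ▸ hM.add_posSemidef hR.posSemidef : W.PosDef).isUnit.invertible
    rw [hT]
    exact inv_mulVec_eq_vec (by rw [← hMc, ← add_mulVec, hWMR])
  have hconv : ∀ u0, Tendsto (fun k => T^[k] u0) atTop (𝓝 ustar) := by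
    rw [hTaff] at hfix ⊢
    exact tendsto_iterate_mulVec_add
      (hWMR ▸ hM.tendsto_pow_inv_add_mul_nhds_zero hR.posSemidef) hfix
  exact ⟨hfix, fun v hv => tendsto_nhds_unique (by simp [Function.iterate_fixed hv]) (hconv v),
    hconv⟩
end

section
/- Let Z ⊆ Z' be two finite feature sets (datasets) and k a positive semidefinite kernel, σ² > 0. For any test point z, the GPR posterior variance computed with the larger dataset is no larger: K_zz - K_{zZ'}(K_{Z'Z'} + σ²I)^{-1}K_{Z'z} ≤ K_zz - K_{zZ}(K_{ZZ} + σ²I)^{-1}K_{Zz}. -/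
/-!
For positive definite `A`, `v ⬝ᵥ A⁻¹ *ᵥ v = sup_w (2 w ⬝ᵥ v - w ⬝ᵥ A *ᵥ w)`, the supremum being
attained at `w = A⁻¹ v`. The Gram matrix of the smaller dataset is a compression `Pᵀ A P` of that of
the larger one, and its quadratic form is the same supremum restricted to vectors `w = P u`, hence
smaller. Adding `σ² I` makes the Gram matrices positive definite.
-/

open Matrix

namespace Matrix

variable {ι κ : Type*} [Fintype ι] [DecidableEq ι] [Fintype κ] [DecidableEq κ]

lemma PosDef.two_mul_dotProduct_sub_le_dotProduct_inv_mulVec {A : Matrix ι ι ℝ}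
    (hA : A.PosDef) (v w : ι → ℝ) :
    2 * (w ⬝ᵥ v) - w ⬝ᵥ A *ᵥ w ≤ v ⬝ᵥ A⁻¹ *ᵥ v := by
  set s := A⁻¹ *ᵥ v
  have hAs : A *ᵥ s = v := by
    rw [mulVec_mulVec, mul_nonsing_inv _ (A.isUnit_iff_isUnit_det.mp hA.isUnit), one_mulVec]
  have hAt : Aᵀ = A := by
    simpa [conjTranspose_eq_transpose_of_trivial] using hA.isHermitian.eq
  have hsA : ∀ u, s ⬝ᵥ A *ᵥ u = u ⬝ᵥ v := fun u => by
    rw [← hAt, dotProduct_transpose_mulVec, hAs]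
  have hnonneg : 0 ≤ (w - s) ⬝ᵥ A *ᵥ (w - s) := by
    simpa using hA.posSemidef.dotProduct_mulVec_nonneg (w - s)
  simp only [mulVec_sub, dotProduct_sub, sub_dotProduct, hsA, hAs] at hnonneg
  rw [dotProduct_comm v s]
  linarith

lemma PosDef.dotProduct_inv_transpose_mul_mul_mulVec_le {A : Matrix ι ι ℝ} (hA : A.PosDef)
    (P : Matrix ι κ ℝ) (v : ι → ℝ) :
    (Pᵀ *ᵥ v) ⬝ᵥ (Pᵀ * A * P)⁻¹ *ᵥ (Pᵀ *ᵥ v) ≤ v ⬝ᵥ A⁻¹ *ᵥ v := by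
  set B := Pᵀ * A * P
  by_cases hB : IsUnit B.det
  · set w := B⁻¹ *ᵥ (Pᵀ *ᵥ v)
    have hBw : B *ᵥ w = Pᵀ *ᵥ v := by
      rw [mulVec_mulVec, mul_nonsing_inv _ hB, one_mulVec]
    have hlin : (P *ᵥ w) ⬝ᵥ v = (Pᵀ *ᵥ v) ⬝ᵥ w := by
      rw [dotProduct_comm _ w, dotProduct_transpose_mulVec, dotProduct_comm]
    have hquad : (P *ᵥ w) ⬝ᵥ A *ᵥ (P *ᵥ w) = (Pᵀ *ᵥ v) ⬝ᵥ w :=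
      calc (P *ᵥ w) ⬝ᵥ A *ᵥ (P *ᵥ w) = w ⬝ᵥ Pᵀ *ᵥ (A *ᵥ (P *ᵥ w)) := by
            rw [dotProduct_transpose_mulVec, dotProduct_comm]
        _ = w ⬝ᵥ B *ᵥ w := by simp only [B, mulVec_mulVec, Matrix.mul_assoc]
        _ = (Pᵀ *ᵥ v) ⬝ᵥ w := by rw [hBw, dotProduct_comm]
    calc (Pᵀ *ᵥ v) ⬝ᵥ B⁻¹ *ᵥ (Pᵀ *ᵥ v)
        = 2 * ((P *ᵥ w) ⬝ᵥ v) - (P *ᵥ w) ⬝ᵥ A *ᵥ (P *ᵥ w) := by rw [hlin, hquad]; ring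
      _ ≤ v ⬝ᵥ A⁻¹ *ᵥ v := hA.two_mul_dotProduct_sub_le_dotProduct_inv_mulVec v _
  · -- junk value: `B⁻¹ = 0`
    rw [nonsing_inv_apply_not_isUnit _ hB, zero_mulVec, dotProduct_zero]
    simpa using hA.posSemidef.inv.dotProduct_mulVec_nonneg v

lemma PosDef.dotProduct_submatrix_inv_mulVec_le {A : Matrix ι ι ℝ} (hA : A.PosDef)
    (f : κ → ι) (v : ι → ℝ) :
    (v ∘ f) ⬝ᵥ (A.submatrix f f)⁻¹ *ᵥ (v ∘ f) ≤ v ⬝ᵥ A⁻¹ *ᵥ v := by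
  set P : Matrix ι κ ℝ := (1 : Matrix ι ι ℝ).submatrix id f
  have hPv : Pᵀ *ᵥ v = v ∘ f := by
    ext i; simp [P, mulVec, dotProduct, one_apply]
  have hPAP : Pᵀ * A * P = A.submatrix f f := by
    ext i j; simp [P, mul_apply, one_apply]
  simpa only [hPv, hPAP] using hA.dotProduct_inv_transpose_mul_mul_mulVec_le P v

end Matrix

theorem stmt_10 {α : Type*} (k : α → α → ℝ)
    (hsymm : ∀ a b, k a b = k b a)
    (hpsd : ∀ (M : ℕ) (f : Fin M → α),
      (Matrix.of fun i j => k (f i) (f j)).PosSemidef)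
    (σ2 : ℝ) (hσ : 0 < σ2) (z : α)
    {N N' : ℕ} (e : Fin N ↪ Fin N') (x' : Fin N' → α)
    (x : Fin N → α) (hx : x = x' ∘ e) :
    k z z - (fun i => k z (x' i)) ⬝ᵥ
        ((Matrix.of fun i j => k (x' i) (x' j)) + σ2 • 1)⁻¹.mulVec (fun i => k (x' i) z)
      ≤ k z z - (fun i => k z (x i)) ⬝ᵥ
        ((Matrix.of fun i j => k (x i) (x j)) + σ2 • 1)⁻¹.mulVec (fun i => k (x i) z) := by
  subst hx
  set A : Matrix (Fin N') (Fin N') ℝ := (Matrix.of fun i j => k (x' i) (x' j)) + σ2 • 1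
  have hA : A.PosDef := PosDef.posSemidef_add (hpsd N' x') (PosDef.one.smul hσ)
  have hsub : A.submatrix e e = (Matrix.of fun i j => k (x' (e i)) (x' (e j))) + σ2 • 1 := by
    ext i j
    simp [A, one_apply, e.injective.eq_iff]
  have hle := hA.dotProduct_submatrix_inv_mulVec_le e (fun i => k (x' i) z)
  rw [hsub] at hle
  simp only [hsymm z]
  exact sub_le_sub_left hle _
end

section
/- If the test point z equals one of the dataset features z^i, then the GPR posterior variance satisfies cov(z|D) = K_zz - K_{zZ}(K_{ZZ}+σ²I)^{-1}K_{Zz} ≤ σ² · (K_zz)/(K_zz + σ²) ≤ σ² for any positive semidefinite kernel, where the bound in the one-point-dataset case is an equality. -/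
/-!
Write `K` for the kernel matrix of the data and `A = K + σ² I`. If `z = x i₀`, the vectors
`K_{zZ}`, `K_{Zz}` are the `i₀`-th row and column of `K = A - σ² I`, and expanding
`(A - σ² I) A⁻¹ (A - σ² I)` collapses the posterior variance to `σ² - σ⁴ (A⁻¹)_{i₀ i₀}`.
For positive definite `A` one has `(A⁻¹)_{ii} ≥ 1 / A_{ii} = 1 / (K_zz + σ²)`, since the quadratic
form of `A` at `e_i / A_{ii} - A⁻¹ e_i` equals `(A⁻¹)_{ii} - 1 / A_{ii}`; this is the bound. For one
data point `A` is `1 × 1` and the inequality is an equality.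
-/

open Matrix

namespace Matrix

variable {n R : Type*} [Fintype n] [DecidableEq n] [CommRing R]

theorem sub_smul_one_sub_mul_inv_mul {A : Matrix n n R} (hA : IsUnit A.det) (s : R) :
    (A - s • 1) - (A - s • 1) * A⁻¹ * (A - s • 1) = s • 1 - s ^ 2 • A⁻¹ := by
  simp only [sub_mul, mul_sub, mul_nonsing_inv A hA, nonsing_inv_mul A hA, Matrix.smul_mul,
    Matrix.mul_smul, Matrix.one_mul, Matrix.mul_one]
  module

omit [DecidableEq n] in
theorem mul_mul_apply_self (K M : Matrix n n R) (i : n) :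
    (K * M * K) i i = (fun j => K i j) ⬝ᵥ (M *ᵥ fun j => K j i) := by
  rw [mul_apply', dotProduct_mulVec]
  rfl

theorem apply_self_sub_dotProduct_inv_add_smul_one_mulVec {K : Matrix n n R} {s : R}
    (hA : IsUnit (K + s • 1).det) (i : n) :
    K i i - (fun j => K i j) ⬝ᵥ ((K + s • 1)⁻¹ *ᵥ fun j => K j i) =
      s - s ^ 2 * (K + s • 1)⁻¹ i i := by
  have h := congrFun₂ (sub_smul_one_sub_mul_inv_mul hA s) i i
  rw [add_sub_cancel_right, sub_apply, mul_mul_apply_self] at h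
  simp [h]

theorem PosDef.inv_apply_self_le_inv_apply_self {A : Matrix n n ℝ} (hA : A.PosDef) (i : n) :
    (A i i)⁻¹ ≤ A⁻¹ i i := by
  have hdet : IsUnit A.det := (isUnit_iff_isUnit_det A).mp hA.isUnit
  set e : n → ℝ := Pi.single i 1
  set y := A⁻¹ *ᵥ e
  have hAy : A *ᵥ y = e := by rw [mulVec_mulVec, mul_nonsing_inv A hdet, one_mulVec]
  have hyA : y ᵥ* A = e := by
    rw [← mulVec_transpose, ← conjTranspose_eq_transpose_of_trivial, hA.isHermitian.eq, hAy]
  have ha : 0 < A i i := hA.diag_pos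
  have hquad : ((A i i)⁻¹ • e - y) ⬝ᵥ (A *ᵥ ((A i i)⁻¹ • e - y)) = A⁻¹ i i - (A i i)⁻¹ := by
    simp only [mulVec_sub, mulVec_smul, hAy, dotProduct_sub, sub_dotProduct, smul_dotProduct,
      dotProduct_smul, dotProduct_mulVec y, hyA]
    simp only [e, y, mulVec_single, MulOpposite.op_one, one_smul, single_dotProduct, col_apply,
      dotProduct_single, Pi.single_eq_same, one_mul, mul_one, smul_eq_mul]
    field_simp
    ring
  have hnonneg := hA.posSemidef.dotProduct_mulVec_nonneg ((A i i)⁻¹ • e - y)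
  rw [star_trivial, hquad] at hnonneg
  exact sub_nonneg.mp hnonneg

end Matrix

section GaussianProcess

variable {α : Type*}

def kernelMatrix (k : α → α → ℝ) {N : ℕ} (x : Fin N → α) : Matrix (Fin N) (Fin N) ℝ :=
  Matrix.of fun i j => k (x i) (x j)

noncomputable def gpPosteriorVariance (k : α → α → ℝ) (σ2 : ℝ) {N : ℕ} (x : Fin N → α) (z : α) :
    ℝ :=
  k z z - (fun i => k z (x i)) ⬝ᵥ (kernelMatrix k x + σ2 • 1)⁻¹ *ᵥ (fun i => k (x i) z)

theorem posDef_kernelMatrix_add_smul_one {k : α → α → ℝ}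
    (hpsd : ∀ (M : ℕ) (f : Fin M → α), (kernelMatrix k f).PosSemidef)
    {σ2 : ℝ} (hσ : 0 < σ2) {N : ℕ} (x : Fin N → α) :
    (kernelMatrix k x + σ2 • 1).PosDef :=
  PosDef.posSemidef_add (hpsd N x) (PosDef.one.smul hσ)

theorem gpPosteriorVariance_of_apply_eq {k : α → α → ℝ} {σ2 : ℝ} {N : ℕ} {x : Fin N → α}
    (hA : IsUnit (kernelMatrix k x + σ2 • 1).det) {i0 : Fin N} {z : α} (hz : x i0 = z) :
    gpPosteriorVariance k σ2 x z = σ2 - σ2 ^ 2 * (kernelMatrix k x + σ2 • 1)⁻¹ i0 i0 := by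
  subst hz
  exact apply_self_sub_dotProduct_inv_add_smul_one_mulVec hA i0

theorem kernelMatrix_add_smul_one_apply_of_apply_eq (k : α → α → ℝ) (σ2 : ℝ) {N : ℕ}
    {x : Fin N → α} {i0 : Fin N} {z : α} (hz : x i0 = z) :
    (kernelMatrix k x + σ2 • 1) i0 i0 = k z z + σ2 := by
  simp [kernelMatrix, hz]

end GaussianProcess

theorem stmt_11_general {α : Type*} (k : α → α → ℝ)
    (hpsd : ∀ (M : ℕ) (f : Fin M → α),
      (Matrix.of fun i j => k (f i) (f j)).PosSemidef)
    (σ2 : ℝ) (hσ : 0 < σ2) (z : α)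
    {N : ℕ} (x : Fin N → α) (i0 : Fin N) (hz : x i0 = z)
    (cov : ℝ)
    (hcov : cov = k z z - (fun i => k z (x i)) ⬝ᵥ
      ((Matrix.of fun i j => k (x i) (x j)) + σ2 • 1)⁻¹.mulVec (fun i => k (x i) z)) :
    (cov ≤ σ2 * k z z / (k z z + σ2) ∧ cov ≤ σ2) ∧
      ∀ x1 : Fin 1 → α, x1 0 = z →
        k z z - (fun i => k z (x1 i)) ⬝ᵥ
            ((Matrix.of fun i j => k (x1 i) (x1 j)) + σ2 • 1)⁻¹.mulVec (fun i => k (x1 i) z)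
          = σ2 * k z z / (k z z + σ2) := by
  have hA {M : ℕ} (f : Fin M → α) := posDef_kernelMatrix_add_smul_one hpsd hσ f
  have hunit {M : ℕ} (f : Fin M → α) : IsUnit (kernelMatrix k f + σ2 • 1).det :=
    (isUnit_iff_isUnit_det _).mp (hA f).isUnit
  have hc : 0 ≤ k z z := hz ▸ (hpsd N x).diag_nonneg
  have hcσ : 0 < k z z + σ2 := by positivity
  have hclosed : σ2 - σ2 ^ 2 * (k z z + σ2)⁻¹ = σ2 * k z z / (k z z + σ2) := by
    field_simp
    ring
  have hbound := (hA x).inv_apply_self_le_inv_apply_self i0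
  rw [kernelMatrix_add_smul_one_apply_of_apply_eq k σ2 hz] at hbound
  have hle : cov ≤ σ2 * k z z / (k z z + σ2) := by
    rw [hcov, ← hclosed]
    change gpPosteriorVariance k σ2 x z ≤ _
    rw [gpPosteriorVariance_of_apply_eq (hunit x) hz]
    gcongr
  refine ⟨⟨hle, hle.trans ?_⟩, fun x1 hx1 => ?_⟩
  · rw [div_le_iff₀ hcσ]
    nlinarith
  · change gpPosteriorVariance k σ2 x1 z = _
    rw [gpPosteriorVariance_of_apply_eq (hunit x1) hx1, inv_subsingleton, diagonal_apply_eq,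
      kernelMatrix_add_smul_one_apply_of_apply_eq k σ2 hx1, Ring.inverse_eq_inv, hclosed]

theorem stmt_11 {α : Type*} (k : α → α → ℝ)
    (hsymm : ∀ a b, k a b = k b a)
    (hpsd : ∀ (M : ℕ) (f : Fin M → α),
      (Matrix.of fun i j => k (f i) (f j)).PosSemidef)
    (σ2 : ℝ) (hσ : 0 < σ2) (z : α)
    {N : ℕ} (x : Fin N → α) (i0 : Fin N) (hz : x i0 = z)
    (cov : ℝ)
    (hcov : cov = k z z - (fun i => k z (x i)) ⬝ᵥ
      ((Matrix.of fun i j => k (x i) (x j)) + σ2 • 1)⁻¹.mulVec (fun i => k (x i) z)) :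
    (cov ≤ σ2 * k z z / (k z z + σ2) ∧ cov ≤ σ2) ∧
      ∀ x1 : Fin 1 → α, x1 0 = z →
        k z z - (fun i => k z (x1 i)) ⬝ᵥ
            ((Matrix.of fun i j => k (x1 i) (x1 j)) + σ2 • 1)⁻¹.mulVec (fun i => k (x1 i) z)
          = σ2 * k z z / (k z z + σ2) :=
  stmt_11_general k hpsd σ2 hσ z x i0 hz cov hcov
end
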